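/- arXiv:0808.1435 — 7 statements merged into one kernel-verified Lean document; each statement's English description precedes it below -/
import Mathlib

section
/- With D(t) = C(t) − 1 where C(t) is the Catalan generating function, the identity ((1+D(t))/(1−D(t)))² = 1/(1−4t) holds as formal power series. -/
open PowerSeries Finset

/-- Generating function of the Catalan numbers `C_n = (1/(n+1))·binom(2n,n)`. -/
noncomputable def catGF : PowerSeries ℚ :=
  PowerSeries.mk fun n => (Nat.choose (2 * n) n : ℚ) / (n + 1)

/-- `D(t) = C(t) - 1`. -/
noncomputable def DGF : PowerSeries ℚ := catGF - 1

/-- A lattice walk of length `n` with steps `±1`. -/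
def IsWalk (n : ℕ) (L : Fin (n + 1) → ℤ) : Prop :=
  ∀ k : Fin n, |L k.succ - L k.castSucc| = 1

/-- Two walks intersect (share a common point at the same time). -/
def Meets {m : ℕ} (L L' : Fin m → ℤ) : Prop := ∃ k, L k = L' k

/-- All triples of walks of length `n` starting at heights `0, 2i, 2i+2j`. -/
def USet (i j n : ℕ) :
    Set ((Fin (n + 1) → ℤ) × (Fin (n + 1) → ℤ) × (Fin (n + 1) → ℤ)) :=
  {T | IsWalk n T.1 ∧ IsWalk n T.2.1 ∧ IsWalk n T.2.2 ∧
    T.1 0 = 0 ∧ T.2.1 0 = 2 * i ∧ T.2.2 0 = 2 * i + 2 * j}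

/-- Triples where `L₁` and `L₂` are nonintersecting. -/
def W12Set (i j n : ℕ) := {T ∈ USet i j n | ¬ Meets T.1 T.2.1}

/-- Triples where `L₂` and `L₃` are nonintersecting. -/
def W23Set (i j n : ℕ) := {T ∈ USet i j n | ¬ Meets T.2.1 T.2.2}

/-- Triples where `L₁` intersects `L₃`. -/
def M13Set (i j n : ℕ) := {T ∈ USet i j n | Meets T.1 T.2.2}

/-- Triples where `L₂` intersects both `L₁` and `L₃`. -/
def M1223Set (i j n : ℕ) :=
  {T ∈ USet i j n | Meets T.2.1 T.1 ∧ Meets T.2.1 T.2.2}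

/-- Vicious (pairwise nonintersecting) triples. -/
def VSet (i j n : ℕ) :=
  {T ∈ USet i j n | ¬ Meets T.1 T.2.1 ∧ ¬ Meets T.2.1 T.2.2 ∧ ¬ Meets T.1 T.2.2}

/-- Pairs of walks of length `n` starting at heights `0` and `2i`. -/
def PairSet (i n : ℕ) : Set ((Fin (n + 1) → ℤ) × (Fin (n + 1) → ℤ)) :=
  {P | IsWalk n P.1 ∧ IsWalk n P.2 ∧ P.1 0 = 0 ∧ P.2 0 = 2 * i}

/-- Intersecting pairs. -/
def MSet (i n : ℕ) := {P ∈ PairSet i n | Meets P.1 P.2}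

/-- Nonintersecting (vicious) pairs. -/
def NSet (i n : ℕ) := {P ∈ PairSet i n | ¬ Meets P.1 P.2}

/-- Converging pairs: never meet before time `n`, meet at time `n`. -/
def TSet (i n : ℕ) :=
  {P ∈ PairSet i n | (∀ k : Fin (n + 1), (k : ℕ) < n → P.1 k ≠ P.2 k) ∧
    P.1 (Fin.last n) = P.2 (Fin.last n)}

/-- 2-watermelons of length `n`. -/
def MelonSet (n : ℕ) : Set ((Fin (n + 1) → ℤ) × (Fin (n + 1) → ℤ)) :=
  {P | IsWalk n P.1 ∧ IsWalk n P.2 ∧ P.1 0 = 0 ∧ P.2 0 = 2 ∧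
    P.2 (Fin.last n) = P.1 (Fin.last n) + 2 ∧ ∀ k, P.1 k < P.2 k}

/-- Partial Dyck paths of length `2n` from height `2i` to `0`, strictly positive before the end. -/
def PDyckSet (i n : ℕ) : Set (Fin (2 * n + 1) → ℤ) :=
  {Q | IsWalk (2 * n) Q ∧ Q 0 = 2 * i ∧ Q (Fin.last (2 * n)) = 0 ∧
    ∀ k : Fin (2 * n + 1), (k : ℕ) < 2 * n → 0 < Q k}

/-! The Catalan recurrence says `C = 1 + t C²`, hence `C² (1 - 4t) = C² - 4 (C - 1) = (2 - C)²`;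
dividing by `(2 - C)² (1 - 4t)`, both invertible, gives the identity since `1 + D = C` and
`1 - D = 2 - C`. -/

theorem PowerSeries.sq_mul_inv_eq_inv_of_sq_mul_eq_sq {k : Type*} [Field k] {f g h : k⟦X⟧}
    (hg : constantCoeff g ≠ 0) (hh : constantCoeff h ≠ 0) (hfgh : f ^ 2 * h = g ^ 2) :
    (f * g⁻¹) ^ 2 = h⁻¹ := by
  rw [eq_inv_iff_mul_eq_one hh]
  calc (f * g⁻¹) ^ 2 * h = f ^ 2 * h * (g⁻¹) ^ 2 := by ring
    _ = (g * g⁻¹) ^ 2 := by rw [hfgh, mul_pow]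
    _ = 1 := by rw [PowerSeries.mul_inv_cancel g hg, one_pow]

lemma coeff_catGF (n : ℕ) : coeff n catGF = catalan n := by
  have h : ((n + 1 : ℕ) : ℚ) * catalan n = (2 * n).choose n := by
    exact_mod_cast succ_mul_catalan_eq_centralBinom n
  rw [catGF, coeff_mk, div_eq_iff (by positivity), ← h]
  push_cast
  ring

lemma constantCoeff_catGF : constantCoeff catGF = 1 := by
  simpa using coeff_catGF 0

lemma catGF_eq_one_add_X_mul_sq : catGF = 1 + X * catGF ^ 2 := by
  ext (_ | n)
  · simp [coeff_catGF]
  · rw [map_add, coeff_succ_X_mul, sq, coeff_mul, coeff_one, if_neg n.succ_ne_zero, zero_add,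
      coeff_catGF, catalan_succ']
    simp only [coeff_catGF, Nat.cast_sum, Nat.cast_mul]

theorem stmt2 : ((1 + DGF) * (1 - DGF)⁻¹) ^ 2 = (1 - 4 * PowerSeries.X)⁻¹ := by
  rw [show 1 + DGF = catGF by rw [DGF]; ring, show 1 - DGF = 2 - catGF by rw [DGF]; ring]
  apply sq_mul_inv_eq_inv_of_sq_mul_eq_sq
  · rw [map_sub, constantCoeff_catGF, map_ofNat]
    norm_num
  · simp
  · linear_combination (4 : ℚ⟦X⟧) * catGF_eq_one_add_X_mul_sq
end

section
/- With D(t) = C(t) − 1 where C(t) is the Catalan generating function, (1+D(t))/(1−D(t)) = ∑_{n≥0} binomial(2n,n) t^n as formal power series. -/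
open PowerSeries Finset

/-! With `C = 1 + X C²`, the series `u = 1 - 2 X C` satisfies `u² = 1 - 4 X`. The recurrence
`centralBinom (n + 1) = 4 centralBinom n - 2 catalan n` says `B (1 - 4 X) = u` for the central
binomial series `B`, so `B u = 1` as `u` is a unit. Since `C u = 2 - C`, this gives
`B (2 - C) = C`, and `(1 + D) / (1 - D) = C / (2 - C) = B`. -/

theorem Nat.centralBinom_succ_add_two_mul_catalan (n : ℕ) :
    (n + 1).centralBinom + 2 * catalan n = 4 * n.centralBinom := by
  apply Nat.eq_of_mul_eq_mul_left n.add_one_pos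
  linear_combination succ_mul_centralBinom_succ n + 2 * succ_mul_catalan_eq_centralBinom n

namespace PowerSeries

def centralBinomSeries : PowerSeries ℕ := mk Nat.centralBinom

theorem centralBinomSeries_add_two_mul_X_mul_catalanSeries :
    centralBinomSeries + 2 * X * catalanSeries = 1 + 4 * X * centralBinomSeries := by
  ext n
  cases n with
  | zero => simp [centralBinomSeries]
  | succ n =>
    simp only [← map_ofNat C, map_add, mul_comm _ X, mul_assoc, coeff_succ_X_mul, coeff_C_mul,
      coeff_one, n.succ_ne_zero, if_false, zero_add, centralBinomSeries, coeff_mk,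
      catalanSeries_coeff]
    exact Nat.centralBinom_succ_add_two_mul_catalan n

section CommRing

variable {R : Type*} [CommRing R]

local notation "𝒞" => map (Nat.castRingHom R) catalanSeries
local notation "ℬ" => map (Nat.castRingHom R) centralBinomSeries

theorem map_catalanSeries_sq_mul_X_add_one : 𝒞 ^ 2 * X + 1 = 𝒞 := by
  simpa using congrArg (map (Nat.castRingHom R)) catalanSeries_sq_mul_X_add_one

theorem one_sub_two_mul_X_mul_map_catalanSeries_sq : (1 - 2 * X * 𝒞) ^ 2 = 1 - 4 * X := by
  linear_combination 4 * X * map_catalanSeries_sq_mul_X_add_one (R := R)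

theorem map_centralBinomSeries_mul_one_sub_four_mul_X : ℬ * (1 - 4 * X) = 1 - 2 * X * 𝒞 := by
  have h := congrArg (map (Nat.castRingHom R)) centralBinomSeries_add_two_mul_X_mul_catalanSeries
  simp only [map_add, map_mul, map_ofNat, map_one, map_X] at h
  linear_combination h

theorem map_centralBinomSeries_mul_one_sub_two_mul_X_mul_map_catalanSeries :
    ℬ * (1 - 2 * X * 𝒞) = 1 := by
  have hunit : IsUnit (1 - 2 * X * 𝒞 : R⟦X⟧) := by
    simp [isUnit_iff_constantCoeff]
  apply hunit.mul_right_cancel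
  linear_combination ℬ * one_sub_two_mul_X_mul_map_catalanSeries_sq (R := R)
    + map_centralBinomSeries_mul_one_sub_four_mul_X (R := R)

theorem map_centralBinomSeries_mul_two_sub_map_catalanSeries : ℬ * (2 - 𝒞) = 𝒞 := by
  linear_combination
    𝒞 * map_centralBinomSeries_mul_one_sub_two_mul_X_mul_map_catalanSeries (R := R)
    + 2 * ℬ * map_catalanSeries_sq_mul_X_add_one (R := R)

end CommRing

end PowerSeries

theorem catGF_eq_map_catalanSeries : catGF = map (Nat.castRingHom ℚ) catalanSeries := by
  ext n
  rw [catGF, coeff_mk, coeff_map, catalanSeries_coeff, eq_natCast, eq_comm,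
    eq_div_iff (by positivity), mul_comm, ← Nat.centralBinom_eq_two_mul_choose]
  exact_mod_cast succ_mul_catalan_eq_centralBinom n

theorem stmt3 :
    (1 + DGF) * (1 - DGF)⁻¹ = PowerSeries.mk (fun n => (Nat.choose (2 * n) n : ℚ)) := by
  have hB : PowerSeries.mk (fun n => (Nat.choose (2 * n) n : ℚ)) =
      map (Nat.castRingHom ℚ) centralBinomSeries := by
    ext n
    simp [centralBinomSeries, Nat.centralBinom_eq_two_mul_choose]
  have hD : DGF = map (Nat.castRingHom ℚ) catalanSeries - 1 := by
    rw [DGF, catGF_eq_map_catalanSeries]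
  have hconst : constantCoeff (1 - DGF) ≠ 0 := by
    simp only [hD, map_sub, ← coeff_zero_eq_constantCoeff_apply, coeff_map, catalanSeries_coeff,
      catalan_zero]
    norm_num
  rw [eq_comm, eq_mul_inv_iff_mul_eq hconst, hB, hD]
  linear_combination map_centralBinomSeries_mul_two_sub_map_catalanSeries (R := ℚ)
end

section
/- For every n ≥ 0, 4^n = ∑_{k=0}^{n} binomial(2k,k)·binomial(2n−2k, n−k). -/
open PowerSeries Finset

open Nat

private noncomputable def Sfun (n : ℕ) : ℕ :=
  ∑ k ∈ Finset.range (n + 1), centralBinom k * centralBinom (n - k)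

private lemma S_succ (n : ℕ) : Sfun (n + 1) = 4 * Sfun n := by
  have key : (n + 1) * Sfun (n + 1) = (n + 1) * (4 * Sfun n) := by
    have h1 : (n + 1) * Sfun (n + 1)
        = 2 * ∑ k ∈ range (n + 2), k * (centralBinom k * centralBinom (n + 1 - k)) := by
      have refl1 : ∑ k ∈ range (n + 2), (n + 1 - k) * (centralBinom k * centralBinom (n + 1 - k))
          = ∑ k ∈ range (n + 2), k * (centralBinom k * centralBinom (n + 1 - k)) := by
        rw [← Finset.sum_range_reflect]
        apply Finset.sum_congr rfl
        intro k hk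
        simp only [Finset.mem_range] at hk
        have ha : n + 2 - 1 - k = n + 1 - k := by omega
        have h1 : n + 1 - (n + 1 - k) = k := by omega
        rw [ha, h1, mul_comm (centralBinom (n + 1 - k))]
      rw [Sfun, Finset.mul_sum]
      rw [two_mul]; nth_rewrite 2 [← refl1]; rw [← Finset.sum_add_distrib]
      apply Finset.sum_congr rfl
      intro k hk
      simp only [Finset.mem_range] at hk
      set X := centralBinom k * centralBinom (n + 1 - k) with hX
      have hn : n + 1 = k + (n + 1 - k) := by omega
      calc (n + 1) * X = (k + (n + 1 - k)) * X := by rw [← hn]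
        _ = k * X + (n + 1 - k) * X := add_mul _ _ _
    have h2 : ∑ k ∈ range (n + 2), k * (centralBinom k * centralBinom (n + 1 - k))
        = ∑ j ∈ range (n + 1), 2 * (2 * j + 1) * (centralBinom j * centralBinom (n - j)) := by
      rw [Finset.sum_range_succ']
      simp only [Nat.zero_mul, add_zero]
      apply Finset.sum_congr rfl
      intro j hj
      have hsub : n + 1 - (j + 1) = n - j := by omega
      rw [hsub, ← mul_assoc, Nat.succ_mul_centralBinom_succ, mul_assoc]
    have h3 : 2 * ∑ j ∈ range (n + 1), (2 * j + 1) * (centralBinom j * centralBinom (n - j))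
        = (2 * n + 2) * Sfun n := by
      have refl2 : ∑ j ∈ range (n + 1), (2 * j + 1) * (centralBinom j * centralBinom (n - j))
          = ∑ j ∈ range (n + 1), (2 * (n - j) + 1) * (centralBinom j * centralBinom (n - j)) := by
        rw [← Finset.sum_range_reflect]
        apply Finset.sum_congr rfl
        intro j hj
        simp only [Finset.mem_range] at hj
        have ha : n + 1 - 1 - j = n - j := by omega
        have h1 : n - (n - j) = j := by omega
        rw [ha, h1, mul_comm (centralBinom (n - j))]
      rw [two_mul]
      nth_rewrite 2 [refl2]
      rw [← Finset.sum_add_distrib, Sfun, Finset.mul_sum]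
      apply Finset.sum_congr rfl
      intro j hj
      simp only [Finset.mem_range] at hj
      have hn : 2 * j + 1 + (2 * (n - j) + 1) = 2 * n + 2 := by omega
      rw [← add_mul, hn]
    calc (n + 1) * Sfun (n + 1)
        = 2 * ∑ k ∈ range (n + 2), k * (centralBinom k * centralBinom (n + 1 - k)) := h1
      _ = 2 * ∑ j ∈ range (n + 1), 2 * (2 * j + 1) * (centralBinom j * centralBinom (n - j)) := by
          rw [h2]
      _ = 2 * (2 * ∑ j ∈ range (n + 1), (2 * j + 1) * (centralBinom j * centralBinom (n - j))) := by
          congr 1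
          rw [Finset.mul_sum]
          apply Finset.sum_congr rfl
          intros; ring
      _ = 2 * ((2 * n + 2) * Sfun n) := by rw [h3]
      _ = (n + 1) * (4 * Sfun n) := by ring
  exact Nat.eq_of_mul_eq_mul_left (by omega) key

private lemma pow_eq_S (n : ℕ) : 4 ^ n = Sfun n := by
  induction n with
  | zero => simp [Sfun, centralBinom]
  | succ n ih => rw [S_succ, ← ih, pow_succ, mul_comm]


theorem stmt4 (n : ℕ) :
    4 ^ n = ∑ k ∈ Finset.range (n + 1),
      Nat.choose (2 * k) k * Nat.choose (2 * (n - k)) (n - k) := by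
  rw [pow_eq_S]; rfl
end

section
/- With C(t) the Catalan generating function, C(t)/(1 − t·C(t)²) = ∑_{n≥0} binomial(2n,n) t^n as formal power series. -/
open PowerSeries Finset

/-! Write `B(t) = ∑ binom(2n,n) tⁿ`. Since `(n+1) C_n = binom(2n,n)`, `B` is the derivative of
`D = t·C`, and differentiating the Catalan equation `D = t + D²` gives `B·(1 - 2D) = 1`.
On the other hand `C = 1 + t·C²` gives `1 - t·C² = 2 - C = C·(1 - 2D)`, so
`B·(1 - t·C²) = C`. -/

noncomputable def centralBinomGF : PowerSeries ℚ :=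
  PowerSeries.mk fun n => (Nat.choose (2 * n) n : ℚ)

lemma succ_mul_catalan_eq_choose (n : ℕ) :
    ((n : ℚ) + 1) * catalan n = (2 * n).choose n := by
  exact_mod_cast succ_mul_catalan_eq_centralBinom n

lemma derivative_X_mul_catGF : derivative ℚ (X * catGF) = centralBinomGF := by
  ext n
  rw [coeff_derivative, coeff_succ_X_mul, coeff_catGF, centralBinomGF, coeff_mk,
    ← succ_mul_catalan_eq_choose, mul_comm]

lemma centralBinomGF_mul_one_sub_two_X_mul_catGF :
    centralBinomGF * (1 - 2 * X * catGF) = 1 := by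
  have hD : X * catGF = X + (X * catGF) ^ 2 := by
    nth_rw 1 [catGF_eq_one_add_X_mul_sq]
    ring
  have hderiv := congrArg (derivative ℚ) hD
  rw [map_add, derivative_X, Derivation.leibniz_pow, derivative_X_mul_catGF, smul_eq_mul,
    nsmul_eq_mul, Nat.add_one_sub_one, pow_one, Nat.cast_ofNat] at hderiv
  linear_combination hderiv

lemma one_sub_X_mul_catGF_sq : 1 - X * catGF ^ 2 = catGF * (1 - 2 * X * catGF) := by
  linear_combination -catGF_eq_one_add_X_mul_sq

theorem stmt6 :
    catGF * (1 - PowerSeries.X * catGF ^ 2)⁻¹ =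
      PowerSeries.mk (fun n => (Nat.choose (2 * n) n : ℚ)) := by
  have hunit : constantCoeff (1 - X * catGF ^ 2) ≠ 0 := by simp
  refine ((eq_mul_inv_iff_mul_eq hunit).2 ?_).symm
  calc centralBinomGF * (1 - X * catGF ^ 2)
      = catGF * (centralBinomGF * (1 - 2 * X * catGF)) := by
        rw [one_sub_X_mul_catGF_sq]; ring
    _ = catGF := by rw [centralBinomGF_mul_one_sub_two_X_mul_catGF, mul_one]
end

section
/- For n ≥ 1, there is a bijection between the set M_{12,23}(n) of 3-tuples of lattice walks (L₁,L₂,L₃) of length n starting at heights 0, 2i, 2i+2j respectively (with steps ±1) such that L₂ intersects both L₁ and L₃, and the set M_{13}(n) of such 3-tuples in which L₁ intersects L₃. -/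
open PowerSeries Finset

/-!
Let `a` and `b` be the first times at which the middle walk `L₂` meets `L₁` and `L₃`. If `a < b`,
exchange the tails of `L₁` and `L₂` after `a`; if `b < a`, exchange the tails of `L₂` and `L₃`
after `b`; otherwise do nothing. The swapped pair still first meets at the same time and the other
contact of the middle walk can only move later, so this map is an involution. It sends
`M_{12,23}` into `M_{13}`: the exchanged tail carries the later contact of `L₂` over to the outer
pair (and if `a = b` all three walks meet there). Conversely, as the starting gaps are positive
and even, walks can only cross by meeting; so if `L₁` meets `L₃` at time `c`, the middle walk
has met one of them by time `c`, strictly earlier when `a ≠ b`, and the exchange supplies the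
missing contact of `L₂`.
-/

section Switch

variable {n : ℕ} {a : WithTop (Fin (n + 1))} {L L' : Fin (n + 1) → ℤ} {k : Fin (n + 1)}

def switch (a : WithTop (Fin (n + 1))) (L L' : Fin (n + 1) → ℤ) : Fin (n + 1) → ℤ :=
  fun k => if (k : WithTop (Fin (n + 1))) ≤ a then L k else L' k

lemma switch_of_le (h : (k : WithTop (Fin (n + 1))) ≤ a) : switch a L L' k = L k :=
  if_pos h

lemma switch_of_lt (h : a < k) : switch a L L' k = L' k :=
  if_neg (not_le.2 h)

lemma switch_top : switch ⊤ L L' = L :=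
  funext fun _ => switch_of_le le_top

lemma switch_zero : switch a L L' 0 = L 0 := by
  induction a using WithTop.recTopCoe with
  | top => exact switch_of_le le_top
  | coe x => exact switch_of_le (WithTop.coe_le_coe.2 (Fin.zero_le x))

lemma switch_switch : switch a (switch a L L') (switch a L' L) = L := by
  funext k
  unfold switch
  split_ifs <;> rfl

lemma switch_eq_switch_iff : switch a L L' k = switch a L' L k ↔ L k = L' k := by
  unfold switch
  split_ifs
  exacts [Iff.rfl, eq_comm]

lemma isWalk_switch (hL : IsWalk n L) (hL' : IsWalk n L')
    (ha : ∀ x : Fin (n + 1), a = x → L x = L' x) : IsWalk n (switch a L L') := by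
  induction a using WithTop.recTopCoe with
  | top => rwa [switch_top]
  | coe x =>
    intro k
    simp only [switch, WithTop.coe_le_coe]
    split_ifs with h1 h0 h0
    · exact hL k
    · exact absurd (h1.trans' (Fin.castSucc_le_succ k)) h0
    · have hx : x = k.castSucc :=
        le_antisymm (Fin.le_castSucc_iff.2 (not_le.1 h1)) h0
      rw [hx] at ha
      rw [ha _ rfl]
      exact hL' k
    · exact hL' k

end Switch

section FirstMeet

variable {n : ℕ} {L L' L'' : Fin (n + 1) → ℤ} {k : Fin (n + 1)}

/-- `⊤` when the walks never meet; `switch ⊤` is then the identity. -/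
noncomputable def firstMeet (L L' : Fin (n + 1) → ℤ) : WithTop (Fin (n + 1)) :=
  (univ.filter fun k => L k = L' k).min

lemma firstMeet_le (h : L k = L' k) : firstMeet L L' ≤ k :=
  Finset.min_le (by simpa using h)

lemma apply_eq_of_firstMeet_eq (h : firstMeet L L' = k) : L k = L' k := by
  simpa using Finset.mem_of_min h

lemma firstMeet_ne_top_iff : firstMeet L L' ≠ ⊤ ↔ Meets L L' := by
  simp [firstMeet, Finset.min_eq_top, Finset.filter_eq_empty_iff, Meets]

lemma firstMeet_comm : firstMeet L L' = firstMeet L' L := by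
  simp only [firstMeet, eq_comm]

lemma firstMeet_switch (a : WithTop (Fin (n + 1))) :
    firstMeet (switch a L L') (switch a L' L) = firstMeet L L' := by
  simp only [firstMeet, switch_eq_switch_iff]

lemma lt_firstMeet_switch {a : WithTop (Fin (n + 1))} (h : a < firstMeet L L'') :
    a < firstMeet (switch a L L') L'' := by
  by_contra hle
  obtain ⟨x, hx⟩ := WithTop.ne_top_iff_exists.1 (ne_top_of_le_ne_top h.ne_top (not_lt.1 hle))
  have hxa : (x : WithTop (Fin (n + 1))) ≤ a := hx ▸ not_lt.1 hle
  have hmeet : L x = L'' x := (switch_of_le hxa).symm.trans (apply_eq_of_firstMeet_eq hx.symm)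
  exact (h.trans_le (firstMeet_le hmeet)).not_ge hxa

lemma firstMeet_lt_of_lt {M P Q : Fin (n + 1) → ℤ} (hlt : firstMeet M P < firstMeet M Q)
    (hle : firstMeet M P ≤ k) (hk : P k = Q k) : firstMeet M P < k := by
  refine hle.lt_of_ne fun heq => hlt.not_ge ?_
  exact heq ▸ firstMeet_le ((apply_eq_of_firstMeet_eq heq).trans hk)

end FirstMeet

section Crossing

variable {n : ℕ} {L L' : Fin (n + 1) → ℤ}

lemma IsWalk.step (hL : IsWalk n L) (k : Fin n) :
    L k.succ = L k.castSucc + 1 ∨ L k.succ = L k.castSucc - 1 := by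
  rcases (abs_eq zero_le_one).1 (hL k) with h | h <;> [left; right] <;> linarith

/-- The gap `L' - L` changes by `0` or `±2` at each step, so it stays even and cannot jump
over `0`. -/
lemma lt_of_forall_le_ne (hL : IsWalk n L) (hL' : IsWalk n L') (h0 : L 0 < L' 0)
    (hpar : 2 ∣ L' 0 - L 0) (t : Fin (n + 1)) (hne : ∀ k ≤ t, L k ≠ L' k) : L t < L' t := by
  suffices L t < L' t ∧ 2 ∣ L' t - L t from this.1
  induction t using Fin.induction with
  | zero => exact ⟨h0, hpar⟩
  | succ k ih =>
    have ih := ih fun x hx => hne x (hx.trans (Fin.castSucc_le_succ k))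
    have hk := hne k.succ le_rfl
    rcases hL.step k with h | h <;> rcases hL'.step k with h' | h' <;> omega

lemma firstMeet_le_of_le (hL : IsWalk n L) (hL' : IsWalk n L') (h0 : L 0 < L' 0)
    (hpar : 2 ∣ L' 0 - L 0) {t : Fin (n + 1)} (ht : L' t ≤ L t) : firstMeet L L' ≤ t := by
  by_contra hlt
  refine (lt_of_forall_le_ne hL hL' h0 hpar t fun k hk hmeet => ?_).not_ge ht
  exact (not_le.1 hlt).not_ge ((firstMeet_le hmeet).trans (WithTop.coe_le_coe.2 hk))

lemma min_firstMeet_le {i j : ℕ} {T} (hT : T ∈ USet i j n) (hi : 1 ≤ i) (hj : 1 ≤ j)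
    {c : Fin (n + 1)} (hc : T.1 c = T.2.2 c) :
    min (firstMeet T.2.1 T.1) (firstMeet T.2.1 T.2.2) ≤ c := by
  obtain ⟨w1, w2, w3, s1, s2, s3⟩ := hT
  rcases le_or_gt (T.2.1 c) (T.1 c) with h | h
  · exact min_le_of_left_le (firstMeet_comm ▸ firstMeet_le_of_le w1 w2 (by omega) (by omega) h)
  · exact min_le_of_right_le (firstMeet_le_of_le w2 w3 (by omega) (by omega) (by omega))

end Crossing

section Exchange

variable {i j n : ℕ}

abbrev WalkTriple (n : ℕ) := (Fin (n + 1) → ℤ) × (Fin (n + 1) → ℤ) × (Fin (n + 1) → ℤ)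

noncomputable def exchange (T : WalkTriple n) : WalkTriple n :=
  let a := firstMeet T.2.1 T.1
  let b := firstMeet T.2.1 T.2.2
  if a < b then (switch a T.1 T.2.1, switch a T.2.1 T.1, T.2.2)
  else if b < a then (T.1, switch b T.2.1 T.2.2, switch b T.2.2 T.2.1)
  else T

variable {T : WalkTriple n}

lemma exchange_of_lt (h : firstMeet T.2.1 T.1 < firstMeet T.2.1 T.2.2) :
    exchange T = (switch (firstMeet T.2.1 T.1) T.1 T.2.1,
      switch (firstMeet T.2.1 T.1) T.2.1 T.1, T.2.2) :=
  if_pos h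

lemma exchange_of_gt (h : firstMeet T.2.1 T.2.2 < firstMeet T.2.1 T.1) :
    exchange T = (T.1, switch (firstMeet T.2.1 T.2.2) T.2.1 T.2.2,
      switch (firstMeet T.2.1 T.2.2) T.2.2 T.2.1) :=
  (if_neg h.not_gt).trans (if_pos h)

lemma exchange_of_eq (h : firstMeet T.2.1 T.1 = firstMeet T.2.1 T.2.2) : exchange T = T :=
  (if_neg h.not_lt).trans (if_neg h.not_gt)

lemma exchange_involutive : Function.Involutive (exchange (n := n)) := by
  intro T
  rcases lt_trichotomy (firstMeet T.2.1 T.1) (firstMeet T.2.1 T.2.2) with h | h | h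
  · rw [exchange_of_lt h, exchange_of_lt]
    · simp only [firstMeet_switch, switch_switch]
    · simpa only [firstMeet_switch] using lt_firstMeet_switch h
  · rw [exchange_of_eq h, exchange_of_eq h]
  · rw [exchange_of_gt h, exchange_of_gt]
    · simp only [firstMeet_switch, switch_switch]
    · simpa only [firstMeet_switch] using lt_firstMeet_switch h

lemma exchange_mem_USet (hT : T ∈ USet i j n) : exchange T ∈ USet i j n := by
  obtain ⟨w1, w2, w3, s1, s2, s3⟩ := id hT
  have e12 : ∀ x : Fin (n + 1), firstMeet T.2.1 T.1 = x → T.2.1 x = T.1 x :=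
    fun _ => apply_eq_of_firstMeet_eq
  have e23 : ∀ x : Fin (n + 1), firstMeet T.2.1 T.2.2 = x → T.2.1 x = T.2.2 x :=
    fun _ => apply_eq_of_firstMeet_eq
  rcases lt_trichotomy (firstMeet T.2.1 T.1) (firstMeet T.2.1 T.2.2) with h | h | h
  · rw [exchange_of_lt h]
    exact ⟨isWalk_switch w1 w2 fun x h => (e12 x h).symm, isWalk_switch w2 w1 e12, w3,
      switch_zero.trans s1, switch_zero.trans s2, s3⟩
  · rwa [exchange_of_eq h]
  · rw [exchange_of_gt h]
    exact ⟨w1, isWalk_switch w2 w3 e23, isWalk_switch w3 w2 fun x h => (e23 x h).symm,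
      s1, switch_zero.trans s2, switch_zero.trans s3⟩

lemma exchange_mem_M13Set (hT : T ∈ M1223Set i j n) : exchange T ∈ M13Set i j n := by
  obtain ⟨hU, h12, h23⟩ := hT
  refine ⟨exchange_mem_USet hU, ?_⟩
  obtain ⟨a, ha⟩ := WithTop.ne_top_iff_exists.1 (firstMeet_ne_top_iff.2 h12)
  obtain ⟨b, hb⟩ := WithTop.ne_top_iff_exists.1 (firstMeet_ne_top_iff.2 h23)
  rcases lt_trichotomy (firstMeet T.2.1 T.1) (firstMeet T.2.1 T.2.2) with h | h | h
  · rw [exchange_of_lt h]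
    exact ⟨b, (switch_of_lt (h.trans_eq hb.symm)).trans (apply_eq_of_firstMeet_eq hb.symm)⟩
  · rw [exchange_of_eq h]
    exact ⟨a, (apply_eq_of_firstMeet_eq ha.symm).symm.trans
      (apply_eq_of_firstMeet_eq (ha.trans h).symm)⟩
  · rw [exchange_of_gt h]
    exact ⟨a, (apply_eq_of_firstMeet_eq ha.symm).symm.trans
      (switch_of_lt (h.trans_eq ha.symm)).symm⟩

lemma exchange_mem_M1223Set (hi : 1 ≤ i) (hj : 1 ≤ j) (hT : T ∈ M13Set i j n) :
    exchange T ∈ M1223Set i j n := by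
  obtain ⟨hU, c, hc⟩ := hT
  have hmin := min_firstMeet_le hU hi hj hc
  refine ⟨exchange_mem_USet hU, ?_⟩
  rcases lt_trichotomy (firstMeet T.2.1 T.1) (firstMeet T.2.1 T.2.2) with h | h | h
  · have hac := firstMeet_lt_of_lt h (min_eq_left h.le ▸ hmin) hc
    rw [exchange_of_lt h]
    exact ⟨firstMeet_ne_top_iff.1 (by rw [firstMeet_switch]; exact h.ne_top),
      c, (switch_of_lt hac).trans hc⟩
  · rw [← h, min_self] at hmin
    rw [exchange_of_eq h]
    have ha : firstMeet T.2.1 T.1 ≠ ⊤ := ne_top_of_le_ne_top WithTop.coe_ne_top hmin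
    exact ⟨firstMeet_ne_top_iff.1 ha, firstMeet_ne_top_iff.1 (h ▸ ha)⟩
  · have hbc := firstMeet_lt_of_lt h (min_eq_right h.le ▸ hmin) hc.symm
    rw [exchange_of_gt h]
    exact ⟨⟨c, (switch_of_lt hbc).trans hc.symm⟩,
      firstMeet_ne_top_iff.1 (by rw [firstMeet_switch]; exact h.ne_top)⟩

end Exchange

theorem stmt7_general (i j n : ℕ) (hi : 1 ≤ i) (hj : 1 ≤ j) :
    Nonempty (M1223Set i j n ≃ M13Set i j n) :=
  ⟨(exchange_involutive.toPerm exchange).subtypeEquiv fun T =>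
    ⟨exchange_mem_M13Set, fun h => exchange_involutive T ▸ exchange_mem_M1223Set hi hj h⟩⟩

theorem stmt7 (i j n : ℕ) (hi : 1 ≤ i) (hj : 1 ≤ j) (hn : 1 ≤ n) :
    Nonempty (M1223Set i j n ≃ M13Set i j n) :=
  stmt7_general i j n hi hj
end

section
/- The number of 2-watermelons of length n (pairs of nonintersecting walks with steps ±1 starting at heights 0 and 2 and ending at heights k and k+2 for some k) is the Catalan number C_{n+1}. -/
open PowerSeries Finset

/-!
Interleave the steps of the two walks into one word: an initial `U`, then at each time the step
of `L₂` followed by the reversed step of `L₁`, then a final `D`. The prefix of length `2k + 1`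
ends at height `L₂ k - L₁ k - 1`, which is nonnegative, and odd-length prefixes have odd height,
so every prefix has nonnegative height and the word ends at `0`. Conversely the odd and even
letters of a Dyck word of semilength `n + 1` are the steps of a 2-watermelon, so the watermelons
of length `n` are in bijection with these Dyck words, which are counted by `C_{n+1}`.
-/

open DyckStep

lemma Finset.sum_range_two_mul_add_one {M : Type*} [AddCommMonoid M] (f : ℕ → M) (k : ℕ) :
    ∑ j ∈ range (2 * k + 1), f j =
      f 0 + ∑ j ∈ range k, (f (2 * j + 1) + f (2 * j + 2)) := by
  induction k with
  | zero => simp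
  | succ k ih =>
    rw [show 2 * (k + 1) + 1 = 2 * k + 1 + 1 + 1 by ring, sum_range_succ, sum_range_succ, ih,
      sum_range_succ, add_assoc, add_assoc]

namespace DyckStep

def toInt : DyckStep → ℤ
  | U => 1
  | D => -1

def ofInt (z : ℤ) : DyckStep := if z = 1 then U else D

lemma abs_toInt (s : DyckStep) : |s.toInt| = 1 := by cases s <;> rfl

lemma ofInt_toInt (s : DyckStep) : ofInt s.toInt = s := by cases s <;> rfl

lemma toInt_ofInt {z : ℤ} (hz : |z| = 1) : (ofInt z).toInt = z := by
  rcases abs_eq (zero_le_one' ℤ) |>.mp hz with rfl | rfl <;> rfl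

end DyckStep

def pathHeight (l : List DyckStep) : ℤ := l.count U - l.count D

lemma pathHeight_append_singleton (l : List DyckStep) (s : DyckStep) :
    pathHeight (l ++ [s]) = pathHeight l + s.toInt := by
  cases s <;> simp [pathHeight, DyckStep.toInt, List.count_append] <;> ring

lemma pathHeight_add_length (l : List DyckStep) : pathHeight l + l.length = 2 * l.count U := by
  induction l using List.reverseRecOn with
  | nil => simp [pathHeight]
  | append_singleton l s ih =>
    rw [pathHeight_append_singleton]
    cases s <;> simp [DyckStep.toInt, List.count_append] <;> omega

lemma pathHeight_take_eq_sum (l : List DyckStep) {i : ℕ} (hi : i ≤ l.length) :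
    pathHeight (l.take i) = ∑ j ∈ Finset.range i, (l.getD j U).toInt := by
  induction i with
  | zero => simp [pathHeight]
  | succ i ih =>
    rw [List.take_add_one, List.getElem?_eq_getElem (by omega), Option.toList_some,
      pathHeight_append_singleton, ih (by omega), Finset.sum_range_succ,
      List.getD_eq_getElem _ _ (by omega)]

lemma pathHeight_take_nonneg_of_odd {l : List DyckStep}
    (h : ∀ i, Odd i → 0 ≤ pathHeight (l.take i)) (i : ℕ) : 0 ≤ pathHeight (l.take i) := by
  obtain ⟨k, rfl | rfl⟩ := Nat.even_or_odd' i
  · rcases k with _ | k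
    · simp [pathHeight]
    have hodd := h (2 * k + 1) (by simp)
    rcases lt_or_ge (2 * k + 1) l.length with hlt | hge
    · -- an odd-length prefix has odd height, so it is at least `1`
      have hpar := pathHeight_add_length (l.take (2 * k + 1))
      rw [List.length_take_of_le hlt.le] at hpar
      rw [show 2 * (k + 1) = 2 * k + 1 + 1 by ring, List.take_add_one,
        List.getElem?_eq_getElem hlt, Option.toList_some, pathHeight_append_singleton]
      have := abs_le.mp (abs_toInt l[2 * k + 1]).le
      omega
    · rwa [List.take_of_length_le hge,
        ← List.take_of_length_le (by omega : l.length ≤ 2 * (k + 1))] at hodd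
  · exact h _ (by simp)

def DyckWord.ofPathHeight (l : List DyckStep) (h_zero : pathHeight l = 0)
    (h_nonneg : ∀ i, 0 ≤ pathHeight (l.take i)) : DyckWord where
  toList := l
  count_U_eq_count_D := by unfold pathHeight at h_zero; omega
  count_D_le_count_U i := by have := h_nonneg i; unfold pathHeight at this; omega

namespace DyckWord

lemma pathHeight_toList (p : DyckWord) : pathHeight p.toList = 0 := by
  rw [pathHeight, p.count_U_eq_count_D, sub_self]

lemma pathHeight_take_nonneg (p : DyckWord) (i : ℕ) : 0 ≤ pathHeight (p.toList.take i) := by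
  have := p.count_D_le_count_U i; unfold pathHeight; omega

lemma getD_zero (p : DyckWord) : p.toList.getD 0 U = U := by
  rcases eq_or_ne p.toList [] with h | h
  · simp [h]
  · rw [List.getD_eq_getElem _ _ (List.length_pos_iff.mpr h), List.getElem_zero, p.head_eq_U]

lemma getD_length_sub_one (p : DyckWord) (hp : p ≠ 0) :
    p.toList.getD (p.toList.length - 1) U = D := by
  have h := toList_ne_nil.mpr hp
  rw [List.getD_eq_getElem _ _ (by simpa [List.length_pos_iff] using h),
    ← List.getLast_eq_getElem h, p.getLast_eq_D]

end DyckWord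

def extendNat {n : ℕ} (L : Fin (n + 1) → ℤ) (k : ℕ) : ℤ :=
  if h : k < n + 1 then L ⟨k, h⟩ else 0

lemma extendNat_of_lt {n : ℕ} (L : Fin (n + 1) → ℤ) {k : ℕ} (hk : k < n + 1) :
    extendNat L k = L ⟨k, hk⟩ :=
  dif_pos hk

lemma extendNat_val {n : ℕ} (L : Fin (n + 1) → ℤ) (k : Fin (n + 1)) : extendNat L k = L k :=
  extendNat_of_lt L k.isLt

lemma extendNat_zero {n : ℕ} (L : Fin (n + 1) → ℤ) : extendNat L 0 = L 0 := rfl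

lemma extendNat_self {n : ℕ} (L : Fin (n + 1) → ℤ) : extendNat L n = L (Fin.last n) :=
  extendNat_of_lt L n.lt_succ_self

lemma IsWalk.abs_extendNat_succ_sub {n : ℕ} {L : Fin (n + 1) → ℤ} (hL : IsWalk n L) {k : ℕ}
    (hk : k < n) : |extendNat L (k + 1) - extendNat L k| = 1 := by
  rw [extendNat_of_lt L (by omega), extendNat_of_lt L (by omega)]
  exact hL ⟨k, hk⟩

/-- Letter `i` of the Dyck word of the 2-watermelon with walks `a < b`: `U`, then alternately the
step of `b` and the reversed step of `a`, then `D`. Its prefix of length `2k+1` has height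
`b k - a k - 1`. -/
def melonLetter (n : ℕ) (a b : ℕ → ℤ) (i : ℕ) : DyckStep :=
  if i = 0 then U
  else if 2 * n < i then D
  else if i % 2 = 1 then ofInt (b (i / 2 + 1) - b (i / 2))
  else ofInt (a (i / 2 - 1) - a (i / 2))

section melonLetter

variable {n : ℕ} {a b : ℕ → ℤ}

lemma melonLetter_zero : melonLetter n a b 0 = U := rfl

lemma melonLetter_two_mul_add_one {k : ℕ} (hk : k < n) :
    melonLetter n a b (2 * k + 1) = ofInt (b (k + 1) - b k) := by
  rw [melonLetter, if_neg (by omega), if_neg (by omega), if_pos (by omega),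
    show (2 * k + 1) / 2 = k by omega]

lemma melonLetter_two_mul_add_one_self : melonLetter n a b (2 * n + 1) = D := by
  rw [melonLetter, if_neg (by omega), if_pos (by omega)]

lemma melonLetter_two_mul_add_two {k : ℕ} (hk : k < n) :
    melonLetter n a b (2 * k + 2) = ofInt (a k - a (k + 1)) := by
  rw [melonLetter, if_neg (by omega), if_neg (by omega), if_neg (by omega),
    show (2 * k + 2) / 2 = k + 1 by omega, Nat.add_sub_cancel]

lemma sum_toInt_melonLetter (ha : ∀ j < n, |a (j + 1) - a j| = 1)
    (hb : ∀ j < n, |b (j + 1) - b j| = 1) {k : ℕ} (hk : k ≤ n) :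
    ∑ j ∈ range (2 * k + 1), (melonLetter n a b j).toInt = b k - a k - (b 0 - a 0) + 1 := by
  have hsteps : ∀ j ∈ range k, (melonLetter n a b (2 * j + 1)).toInt +
      (melonLetter n a b (2 * j + 2)).toInt = (b (j + 1) - b j) - (a (j + 1) - a j) := by
    intro j hj
    have hj : j < n := by simp at hj; omega
    rw [melonLetter_two_mul_add_one hj, melonLetter_two_mul_add_two hj, toInt_ofInt (hb j hj),
      toInt_ofInt (by rw [abs_sub_comm]; exact ha j hj)]
    ring
  rw [sum_range_two_mul_add_one, sum_congr rfl hsteps, sum_sub_distrib, sum_range_sub,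
    sum_range_sub, melonLetter_zero, DyckStep.toInt]
  ring

end melonLetter

def melonList (n : ℕ) (a b : ℕ → ℤ) : List DyckStep :=
  (List.range (2 * n + 2)).map (melonLetter n a b)

section melonList

variable {n : ℕ} {a b : ℕ → ℤ}

@[simp]
lemma length_melonList : (melonList n a b).length = 2 * n + 2 := by simp [melonList]

lemma getD_melonList {i : ℕ} (hi : i < 2 * n + 2) :
    (melonList n a b).getD i U = melonLetter n a b i := by
  simp [melonList, hi]

lemma pathHeight_take_melonList {i : ℕ} (hi : i ≤ 2 * n + 2) :
    pathHeight ((melonList n a b).take i) = ∑ j ∈ range i, (melonLetter n a b j).toInt := by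
  rw [pathHeight_take_eq_sum _ (by simpa using hi)]
  exact sum_congr rfl fun j hj ↦ congrArg _ (getD_melonList (by simp at hj; omega))

end melonList

namespace MelonSet

variable {n : ℕ} {P : (Fin (n + 1) → ℤ) × (Fin (n + 1) → ℤ)}

abbrev word (n : ℕ) (P : (Fin (n + 1) → ℤ) × (Fin (n + 1) → ℤ)) : List DyckStep :=
  melonList n (extendNat P.1) (extendNat P.2)

lemma pathHeight_take_word_odd (hP : P ∈ MelonSet n) {k : ℕ} (hk : k ≤ n) :
    pathHeight ((word n P).take (2 * k + 1)) = extendNat P.2 k - extendNat P.1 k - 1 := by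
  obtain ⟨hw₁, hw₂, h₁, h₂, -, -⟩ := hP
  rw [pathHeight_take_melonList (by omega),
    sum_toInt_melonLetter (fun j hj ↦ hw₁.abs_extendNat_succ_sub hj)
      (fun j hj ↦ hw₂.abs_extendNat_succ_sub hj) hk, extendNat_zero, extendNat_zero, h₁, h₂]
  ring

lemma pathHeight_word (hP : P ∈ MelonSet n) : pathHeight (word n P) = 0 := by
  have hlast := hP.2.2.2.2.1
  rw [← List.take_length (l := word n P), length_melonList, pathHeight_take_melonList le_rfl,
    sum_range_succ, ← pathHeight_take_melonList (by omega), pathHeight_take_word_odd hP le_rfl,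
    melonLetter_two_mul_add_one_self, extendNat_self, extendNat_self, hlast, DyckStep.toInt]
  ring

lemma pathHeight_take_word_nonneg (hP : P ∈ MelonSet n) (i : ℕ) :
    0 ≤ pathHeight ((word n P).take i) := by
  refine pathHeight_take_nonneg_of_odd (fun i hi ↦ ?_) i
  obtain ⟨k, rfl⟩ := hi
  rcases le_or_gt k n with hk | hk
  · have hlt := hP.2.2.2.2.2 ⟨k, by omega⟩
    rw [pathHeight_take_word_odd hP hk, extendNat_of_lt _ (by omega), extendNat_of_lt _ (by omega)]
    omega
  · rw [List.take_of_length_le (by simp; omega), pathHeight_word hP]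

def toDyckWord (hP : P ∈ MelonSet n) : DyckWord :=
  .ofPathHeight (word n P) (pathHeight_word hP) (pathHeight_take_word_nonneg hP)

lemma semilength_toDyckWord (hP : P ∈ MelonSet n) : (toDyckWord hP).semilength = n + 1 := by
  have h₁ := (toDyckWord hP).two_mul_semilength_eq_length
  have h₂ : (toDyckWord hP).toList.length = 2 * n + 2 := length_melonList
  omega

end MelonSet

namespace DyckWord

variable {n : ℕ} {p : DyckWord}

def lowerWalk (p : DyckWord) (k : ℕ) : ℤ :=
  -∑ j ∈ range k, (p.toList.getD (2 * j + 2) U).toInt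

def upperWalk (p : DyckWord) (k : ℕ) : ℤ :=
  2 + ∑ j ∈ range k, (p.toList.getD (2 * j + 1) U).toInt

lemma lowerWalk_succ (p : DyckWord) (k : ℕ) :
    p.lowerWalk (k + 1) = p.lowerWalk k - (p.toList.getD (2 * k + 2) U).toInt := by
  rw [lowerWalk, lowerWalk, sum_range_succ]
  ring

lemma upperWalk_succ (p : DyckWord) (k : ℕ) :
    p.upperWalk (k + 1) = p.upperWalk k + (p.toList.getD (2 * k + 1) U).toInt := by
  rw [upperWalk, upperWalk, sum_range_succ, add_assoc]

lemma upperWalk_sub_lowerWalk (p : DyckWord) (k : ℕ) :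
    p.upperWalk k - p.lowerWalk k = ∑ j ∈ range (2 * k + 1), (p.toList.getD j U).toInt + 1 := by
  rw [upperWalk, lowerWalk, sum_range_two_mul_add_one, getD_zero, sum_add_distrib, DyckStep.toInt]
  ring

def toMelon (n : ℕ) (p : DyckWord) : (Fin (n + 1) → ℤ) × (Fin (n + 1) → ℤ) :=
  (fun k ↦ p.lowerWalk k, fun k ↦ p.upperWalk k)

lemma extendNat_toMelon_fst {k : ℕ} (hk : k < n + 1) :
    extendNat (p.toMelon n).1 k = p.lowerWalk k :=
  extendNat_of_lt _ hk

lemma extendNat_toMelon_snd {k : ℕ} (hk : k < n + 1) :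
    extendNat (p.toMelon n).2 k = p.upperWalk k :=
  extendNat_of_lt _ hk

lemma length_eq_of_semilength_eq (hp : p.semilength = n + 1) : p.toList.length = 2 * n + 2 := by
  have := p.two_mul_semilength_eq_length
  omega

lemma getD_two_mul_add_one_self (hp : p.semilength = n + 1) : p.toList.getD (2 * n + 1) U = D := by
  have hlen := length_eq_of_semilength_eq hp
  have hp0 : p ≠ 0 := by rintro rfl; simp at hp
  rw [show 2 * n + 1 = p.toList.length - 1 by omega, getD_length_sub_one p hp0]

lemma toMelon_mem (hp : p.semilength = n + 1) : p.toMelon n ∈ MelonSet n := by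
  have hlen := length_eq_of_semilength_eq hp
  have hgap : ∀ k ≤ n,
      p.upperWalk k - p.lowerWalk k = pathHeight (p.toList.take (2 * k + 1)) + 1 :=
    fun k hk ↦ by rw [upperWalk_sub_lowerWalk, pathHeight_take_eq_sum _ (by omega)]
  have hend : pathHeight (p.toList.take (2 * n + 1)) = 1 := by
    have h := p.pathHeight_toList
    rw [← List.take_length (l := p.toList), hlen, pathHeight_take_eq_sum _ hlen.ge,
      sum_range_succ, ← pathHeight_take_eq_sum _ (by omega), getD_two_mul_add_one_self hp,
      DyckStep.toInt] at h
    omega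
  refine ⟨fun k ↦ ?_, fun k ↦ ?_, ?_, ?_, ?_, fun k ↦ ?_⟩
  · simp [toMelon, lowerWalk_succ, abs_toInt]
  · simp [toMelon, upperWalk_succ, abs_toInt]
  · simp [toMelon, lowerWalk]
  · simp [toMelon, upperWalk]
  · have := hgap n le_rfl
    simp only [toMelon, Fin.val_last]
    omega
  · have := hgap k (by omega)
    have := p.pathHeight_take_nonneg (2 * k + 1)
    simp only [toMelon]
    omega

end DyckWord

namespace MelonSet

variable {n : ℕ} {P : (Fin (n + 1) → ℤ) × (Fin (n + 1) → ℤ)}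

lemma getD_toDyckWord (hP : P ∈ MelonSet n) {i : ℕ} (hi : i < 2 * n + 2) :
    (toDyckWord hP).toList.getD i U = melonLetter n (extendNat P.1) (extendNat P.2) i :=
  getD_melonList hi

lemma toMelon_toDyckWord (hP : P ∈ MelonSet n) : (toDyckWord hP).toMelon n = P := by
  obtain ⟨hw₁, hw₂, h₁, h₂, -, -⟩ := id hP
  refine Prod.ext (funext fun k ↦ ?_) (funext fun k ↦ ?_)
  · have hsteps : ∀ j ∈ range k, ((toDyckWord hP).toList.getD (2 * j + 2) U).toInt =
        extendNat P.1 j - extendNat P.1 (j + 1) := fun j hj ↦ by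
      have hj : j < n := by simp at hj; omega
      rw [getD_toDyckWord hP (by omega), melonLetter_two_mul_add_two hj,
        toInt_ofInt (by rw [abs_sub_comm]; exact hw₁.abs_extendNat_succ_sub hj)]
    change -∑ j ∈ range k, _ = _
    rw [sum_congr rfl hsteps, sum_range_sub', extendNat_zero, h₁, extendNat_val]
    ring
  · have hsteps : ∀ j ∈ range k, ((toDyckWord hP).toList.getD (2 * j + 1) U).toInt =
        extendNat P.2 (j + 1) - extendNat P.2 j := fun j hj ↦ by
      have hj : j < n := by simp at hj; omega
      rw [getD_toDyckWord hP (by omega), melonLetter_two_mul_add_one hj,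
        toInt_ofInt (hw₂.abs_extendNat_succ_sub hj)]
    change 2 + ∑ j ∈ range k, _ = _
    rw [sum_congr rfl hsteps, sum_range_sub, extendNat_zero, h₂, extendNat_val]
    ring

end MelonSet

namespace DyckWord

variable {n : ℕ} {p : DyckWord}

lemma word_toMelon (hp : p.semilength = n + 1) : MelonSet.word n (p.toMelon n) = p.toList := by
  have hlen := length_eq_of_semilength_eq hp
  refine List.ext_getElem (by simp [hlen]) fun i h₁ h₂ ↦ ?_
  rw [← List.getD_eq_getElem _ U h₁, ← List.getD_eq_getElem _ U h₂,
    getD_melonList (by simpa using h₁)]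
  obtain ⟨k, rfl | rfl⟩ := Nat.even_or_odd' i
  · rcases k with _ | k
    · rw [melonLetter_zero, getD_zero]
    · have hk : k < n := by omega
      rw [show 2 * (k + 1) = 2 * k + 2 by ring, melonLetter_two_mul_add_two hk,
        extendNat_toMelon_fst (by omega), extendNat_toMelon_fst (by omega), lowerWalk_succ,
        sub_sub_cancel, ofInt_toInt]
  · rcases lt_or_eq_of_le (show k ≤ n by omega) with hk | rfl
    · rw [melonLetter_two_mul_add_one hk, extendNat_toMelon_snd (by omega),
        extendNat_toMelon_snd (by omega), upperWalk_succ, add_sub_cancel_left, ofInt_toInt]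
    · rw [melonLetter_two_mul_add_one_self, getD_two_mul_add_one_self hp]

end DyckWord

def MelonSet.equivDyckWord (n : ℕ) : MelonSet n ≃ {p : DyckWord // p.semilength = n + 1} where
  toFun P := ⟨MelonSet.toDyckWord P.2, MelonSet.semilength_toDyckWord P.2⟩
  invFun p := ⟨p.1.toMelon n, DyckWord.toMelon_mem p.2⟩
  left_inv P := Subtype.ext (MelonSet.toMelon_toDyckWord P.2)
  right_inv p := Subtype.ext (DyckWord.ext (DyckWord.word_toMelon p.2))

theorem MelonSet.card_eq_catalan (n : ℕ) : Nat.card (MelonSet n) = catalan (n + 1) := by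
  rw [Nat.card_congr (equivDyckWord n), Nat.card_eq_fintype_card,
    DyckWord.card_dyckWord_semilength_eq_catalan]

theorem stmt10 (n : ℕ) :
    (Nat.card (MelonSet n) : ℚ) = (Nat.choose (2 * n + 2) (n + 1) : ℚ) / (n + 2) := by
  rw [MelonSet.card_eq_catalan, catalan_eq_centralBinom_div,
    Nat.cast_div (Nat.succ_dvd_centralBinom (n + 1)) (by positivity), Nat.centralBinom]
  push_cast
  ring_nf
end

section
/- For n ≥ 1 and i ≥ 1, there is a bijection between the set T(i,n) of pairs of converging walks of length n starting at heights 0 and 2i, and the set P(i,n) of partial Dyck paths of length 2n starting at height 2i that end at height 0 and stay strictly positive before the endpoint. -/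
open PowerSeries Finset

namespace Stmt18Aux

def E {m : ℕ} (f : Fin (m + 1) → ℤ) (j : ℕ) : ℤ :=
  f ⟨min j m, Nat.lt_succ_of_le (Nat.min_le_right _ _)⟩

lemma E_eq {m : ℕ} (f : Fin (m + 1) → ℤ) {j : ℕ} (h : j ≤ m) :
    E f j = f ⟨j, Nat.lt_succ_of_le h⟩ := by
  simp [E, Nat.min_eq_left h]

lemma E_fin {m : ℕ} (f : Fin (m + 1) → ℤ) (k : Fin (m + 1)) : E f k.1 = f k := by
  rw [E_eq f (Nat.lt_succ_iff.mp k.isLt)]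

lemma E_zero {m : ℕ} (f : Fin (m + 1) → ℤ) : E f 0 = f 0 := by
  rw [E_eq f (Nat.zero_le m)]
  congr 1

lemma E_castSucc {m : ℕ} (f : Fin (m + 1) → ℤ) (k : Fin m) :
    f k.castSucc = E f k.1 := by
  rw [E_eq f (le_of_lt k.isLt)]
  congr 1

lemma E_succ {m : ℕ} (f : Fin (m + 1) → ℤ) (k : Fin m) :
    f k.succ = E f (k.1 + 1) := by
  rw [E_eq f k.isLt]
  congr 1

lemma isWalk_iff {m : ℕ} (f : Fin (m + 1) → ℤ) :
    IsWalk m f ↔ ∀ j < m, |E f (j + 1) - E f j| = 1 := by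
  constructor
  · intro h j hj
    have := h ⟨j, hj⟩
    rwa [E_succ f ⟨j, hj⟩, E_castSucc f ⟨j, hj⟩] at this
  · intro h k
    rw [E_succ f k, E_castSucc f k]
    exact h k.1 k.isLt

lemma step_cases {m : ℕ} {f : Fin (m + 1) → ℤ} (h : IsWalk m f) {j : ℕ} (hj : j < m) :
    E f (j + 1) - E f j = 1 ∨ E f (j + 1) - E f j = -1 := by
  have := (isWalk_iff f).mp h j hj
  rcases abs_cases (E f (j + 1) - E f j) with ⟨h1, h2⟩ | ⟨h1, h2⟩ <;> omega


def TSetX (i n : ℕ) : Set ((Fin (n + 1) → ℤ) × (Fin (n + 1) → ℤ)) :=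
  {P | IsWalk n P.1 ∧ IsWalk n P.2 ∧ P.1 0 = 0 ∧ P.2 0 = 2 * i ∧
    (∀ m < n, E P.1 m ≠ E P.2 m) ∧ E P.1 n = E P.2 n}

def PDyckX (i n : ℕ) : Set (Fin (2 * n + 1) → ℤ) :=
  {Q | IsWalk (2 * n) Q ∧ Q 0 = 2 * i ∧ E Q (2 * n) = 0 ∧
    ∀ m < 2 * n, 0 < E Q m}

def fwd (n : ℕ) (L1 L2 : Fin (n + 1) → ℤ) : Fin (2 * n + 1) → ℤ :=
  fun j => E L2 ((j.1 + 1) / 2) - E L1 (j.1 / 2)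

lemma E_fwd (n : ℕ) (L1 L2 : Fin (n + 1) → ℤ) {j : ℕ} (h : j ≤ 2 * n) :
    E (fwd n L1 L2) j = E L2 ((j + 1) / 2) - E L1 (j / 2) := by
  rw [E_eq _ h]
  rfl

def bwd1 (n : ℕ) (Q : Fin (2 * n + 1) → ℤ) : Fin (n + 1) → ℤ :=
  fun k => ∑ j ∈ Finset.range k.1, (E Q (2 * j + 1) - E Q (2 * j + 2))

def bwd2 (n : ℕ) (Q : Fin (2 * n + 1) → ℤ) : Fin (n + 1) → ℤ :=
  fun k => E Q (2 * k.1) + bwd1 n Q k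

lemma E_bwd1 (n : ℕ) (Q : Fin (2 * n + 1) → ℤ) {m : ℕ} (h : m ≤ n) :
    E (bwd1 n Q) m = ∑ j ∈ Finset.range m, (E Q (2 * j + 1) - E Q (2 * j + 2)) := by
  rw [E_eq _ h]
  rfl

lemma E_bwd2 (n : ℕ) (Q : Fin (2 * n + 1) → ℤ) {m : ℕ} (h : m ≤ n) :
    E (bwd2 n Q) m = E Q (2 * m) + E (bwd1 n Q) m := by
  rw [E_eq _ h, E_eq _ h]
  rfl

/-- Key invariant: the gap is even, and positive before time `n`. -/
lemma key (i n : ℕ) (hi : 1 ≤ i) {L1 L2 : Fin (n + 1) → ℤ}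
    (h1 : IsWalk n L1) (h2 : IsWalk n L2) (s1 : L1 0 = 0) (s2 : L2 0 = 2 * i)
    (hne : ∀ m < n, E L1 m ≠ E L2 m) :
    ∀ m ≤ n, (E L2 m - E L1 m) % 2 = 0 ∧ (m < n → 0 < E L2 m - E L1 m) := by
  intro m
  induction m with
  | zero =>
    intro _
    rw [E_zero, E_zero, s1, s2]
    constructor
    · omega
    · intro _; push_cast; omega
  | succ m ih =>
    intro h
    have hm : m ≤ n := by omega
    obtain ⟨ihe, ihp⟩ := ih hm
    have st1 := step_cases h1 (show m < n by omega)
    have st2 := step_cases h2 (show m < n by omega)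
    have hp : 0 < E L2 m - E L1 m := ihp (by omega)
    constructor
    · omega
    · intro hlt
      have hne' := hne (m + 1) hlt
      omega

lemma fwd_mem (i n : ℕ) (hi : 1 ≤ i) {P : (Fin (n + 1) → ℤ) × (Fin (n + 1) → ℤ)}
    (hP : P ∈ TSetX i n) : fwd n P.1 P.2 ∈ PDyckX i n := by
  obtain ⟨w1, w2, z1, z2, hne, hlast⟩ := hP
  have hkey := key i n hi w1 w2 z1 z2 hne
  refine ⟨?_, ?_, ?_, ?_⟩
  · rw [isWalk_iff]
    intro j hj
    rw [E_fwd n _ _ (by omega), E_fwd n _ _ (by omega)]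
    rcases Nat.even_or_odd j with ⟨k, hk⟩ | ⟨k, hk⟩
    · subst hk
      have d1 : (k + k + 1 + 1) / 2 = k + 1 := by omega
      have d2 : (k + k + 1) / 2 = k := by omega
      have d3 : (k + k) / 2 = k := by omega
      rw [d1, d2, d3]
      have hw := (isWalk_iff P.2).mp w2 k (by omega)
      calc |E P.2 (k + 1) - E P.1 k - (E P.2 k - E P.1 k)|
          = |E P.2 (k + 1) - E P.2 k| := by ring_nf
        _ = 1 := hw
    · subst hk
      have d1 : (2 * k + 1 + 1 + 1) / 2 = k + 1 := by omega
      have d2 : (2 * k + 1 + 1) / 2 = k + 1 := by omega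
      have d3 : (2 * k + 1) / 2 = k := by omega
      rw [d1, d2, d3]
      have hw := (isWalk_iff P.1).mp w1 k (by omega)
      calc |E P.2 (k + 1) - E P.1 (k + 1) - (E P.2 (k + 1) - E P.1 k)|
          = |-(E P.1 (k + 1) - E P.1 k)| := by ring_nf
        _ = |E P.1 (k + 1) - E P.1 k| := abs_neg _
        _ = 1 := hw
  · show E P.2 ((0 + 1) / 2) - E P.1 (0 / 2) = 2 * i
    norm_num
    rw [E_zero, E_zero, z1, z2]
    ring
  · rw [E_fwd n _ _ (le_refl _)]
    have d1 : (2 * n + 1) / 2 = n := by omega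
    have d2 : (2 * n) / 2 = n := by omega
    rw [d1, d2, hlast]
    ring
  · intro m hm
    rw [E_fwd n _ _ (by omega)]
    rcases Nat.even_or_odd m with ⟨k, hk⟩ | ⟨k, hk⟩
    · subst hk
      have d1 : (k + k + 1) / 2 = k := by omega
      have d2 : (k + k) / 2 = k := by omega
      rw [d1, d2]
      exact (hkey k (by omega)).2 (by omega)
    · subst hk
      have d1 : (2 * k + 1 + 1) / 2 = k + 1 := by omega
      have d2 : (2 * k + 1) / 2 = k := by omega
      rw [d1, d2]
      have hk1 := hkey k (by omega)
      have hst := step_cases w2 (show k < n by omega)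
      have hpos := hk1.2 (by omega)
      have heven := hk1.1
      omega

lemma bwd_mem (i n : ℕ) (hi : 1 ≤ i) {Q : Fin (2 * n + 1) → ℤ}
    (hQ : Q ∈ PDyckX i n) : (bwd1 n Q, bwd2 n Q) ∈ TSetX i n := by
  obtain ⟨w, z, hlast, hpos⟩ := hQ
  have wq := (isWalk_iff Q).mp w
  refine ⟨?_, ?_, ?_, ?_, ?_, ?_⟩
  · rw [isWalk_iff]
    intro m hm
    rw [E_bwd1 n Q (by omega), E_bwd1 n Q (by omega), Finset.sum_range_succ]
    have hw := wq (2 * m + 1) (by omega)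
    have e : (2 * m + 2 : ℕ) = 2 * m + 1 + 1 := by omega
    rw [e]
    have e2 : (∑ j ∈ Finset.range m, (E Q (2 * j + 1) - E Q (2 * j + 2)) +
            (E Q (2 * m + 1) - E Q (2 * m + 1 + 1))) -
          (∑ j ∈ Finset.range m, (E Q (2 * j + 1) - E Q (2 * j + 2)))
        = -(E Q (2 * m + 1 + 1) - E Q (2 * m + 1)) := by ring
    rw [e2, abs_neg]
    exact hw
  · rw [isWalk_iff]
    intro m hm
    rw [E_bwd2 n Q (by omega), E_bwd2 n Q (by omega),
      E_bwd1 n Q (by omega), E_bwd1 n Q (by omega), Finset.sum_range_succ]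
    have hw := wq (2 * m) (by omega)
    have e1 : 2 * (m + 1) = 2 * m + 1 + 1 := by ring
    have e : (2 * m + 2 : ℕ) = 2 * m + 1 + 1 := by omega
    rw [e1, e]
    have e2 : (E Q (2 * m + 1 + 1) + (∑ j ∈ Finset.range m, (E Q (2 * j + 1) - E Q (2 * j + 2)) +
            (E Q (2 * m + 1) - E Q (2 * m + 1 + 1)))) -
          (E Q (2 * m) + ∑ j ∈ Finset.range m, (E Q (2 * j + 1) - E Q (2 * j + 2)))
        = E Q (2 * m + 1) - E Q (2 * m) := by ring
    rw [e2]
    exact hw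
  · show (∑ j ∈ Finset.range (0 : Fin (n + 1)).1, (E Q (2 * j + 1) - E Q (2 * j + 2))) = 0
    simp
  · show E Q (2 * (0 : Fin (n + 1)).1) + bwd1 n Q 0 = 2 * i
    have : (0 : Fin (n + 1)).1 = 0 := rfl
    rw [this]
    have e0 : E Q 0 = 2 * i := by rw [E_zero, z]
    have eb : bwd1 n Q 0 = 0 := by
      show (∑ j ∈ Finset.range (0 : Fin (n + 1)).1, (E Q (2 * j + 1) - E Q (2 * j + 2))) = 0
      simp
    rw [mul_zero, e0, eb, add_zero]
  · intro m hm
    rw [E_bwd1 n Q (by omega), E_bwd2 n Q (by omega), E_bwd1 n Q (by omega)]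
    have := hpos (2 * m) (by omega)
    omega
  · rw [E_bwd1 n Q (le_refl _), E_bwd2 n Q (le_refl _), E_bwd1 n Q (le_refl _), hlast]
    ring

lemma bwd1_fwd (n : ℕ) (L1 L2 : Fin (n + 1) → ℤ) (hz : L1 0 = 0) :
    bwd1 n (fwd n L1 L2) = L1 := by
  funext k
  rw [← E_fin (bwd1 n (fwd n L1 L2)) k, ← E_fin L1 k,
    E_bwd1 n _ (Nat.lt_succ_iff.mp k.isLt)]
  have hc : ∀ j ∈ Finset.range k.1,
      E (fwd n L1 L2) (2 * j + 1) - E (fwd n L1 L2) (2 * j + 2)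
        = E L1 (j + 1) - E L1 j := by
    intro j hj
    have hjk : j < k.1 := Finset.mem_range.mp hj
    have hjn : j < n := by omega
    rw [E_fwd n _ _ (by omega), E_fwd n _ _ (by omega)]
    have d1 : (2 * j + 1 + 1) / 2 = j + 1 := by omega
    have d2 : (2 * j + 1) / 2 = j := by omega
    have d3 : (2 * j + 2 + 1) / 2 = j + 1 := by omega
    rw [d1, d2, d3]
    ring
  rw [Finset.sum_congr rfl hc, Finset.sum_range_sub (fun j => E L1 j), E_zero, hz, sub_zero]

lemma bwd2_fwd (n : ℕ) (L1 L2 : Fin (n + 1) → ℤ) (hz : L1 0 = 0) :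
    bwd2 n (fwd n L1 L2) = L2 := by
  funext k
  rw [← E_fin (bwd2 n (fwd n L1 L2)) k, ← E_fin L2 k,
    E_bwd2 n _ (Nat.lt_succ_iff.mp k.isLt), bwd1_fwd n L1 L2 hz,
    E_fwd n _ _ (by have := k.isLt; omega)]
  have d1 : (2 * k.1 + 1) / 2 = k.1 := by omega
  have d2 : (2 * k.1) / 2 = k.1 := by omega
  rw [d1, d2]
  ring

lemma fwd_bwd (n : ℕ) (Q : Fin (2 * n + 1) → ℤ) :
    fwd n (bwd1 n Q) (bwd2 n Q) = Q := by
  funext j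
  have hj : j.1 ≤ 2 * n := Nat.lt_succ_iff.mp j.isLt
  rw [← E_fin (fwd n (bwd1 n Q) (bwd2 n Q)) j, ← E_fin Q j, E_fwd n _ _ hj]
  rcases Nat.even_or_odd j.1 with ⟨k, hk⟩ | ⟨k, hk⟩
  · have d1 : (j.1 + 1) / 2 = k := by omega
    have d2 : j.1 / 2 = k := by omega
    rw [d1, d2, E_bwd2 n Q (by omega)]
    have e : 2 * k = j.1 := by omega
    rw [e]
    ring
  · have hkn : k + 1 ≤ n := by omega
    have d1 : (j.1 + 1) / 2 = k + 1 := by omega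
    have d2 : j.1 / 2 = k := by omega
    rw [d1, d2, E_bwd2 n Q hkn, E_bwd1 n Q hkn, E_bwd1 n Q (by omega),
      Finset.sum_range_succ]
    have e1 : 2 * (k + 1) = 2 * k + 2 := by ring
    have e2 : 2 * k + 1 = j.1 := by omega
    rw [e1, e2]
    ring

lemma mem_TSetX {i n : ℕ} {P : (Fin (n + 1) → ℤ) × (Fin (n + 1) → ℤ)} :
    P ∈ TSet i n ↔ P ∈ TSetX i n := by
  constructor
  · rintro ⟨⟨w1, w2, z1, z2⟩, hne, hlast⟩
    refine ⟨w1, w2, z1, z2, ?_, ?_⟩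
    · intro m hm
      rw [E_eq _ (by omega : m ≤ n), E_eq _ (by omega : m ≤ n)]
      exact hne ⟨m, by omega⟩ hm
    · rw [E_eq _ (le_refl n), E_eq _ (le_refl n)]
      exact hlast
  · rintro ⟨w1, w2, z1, z2, hne, hlast⟩
    refine ⟨⟨w1, w2, z1, z2⟩, ?_, ?_⟩
    · intro k hk
      have := hne k.1 hk
      rwa [E_fin, E_fin] at this
    · rw [E_eq _ (le_refl n), E_eq _ (le_refl n)] at hlast
      exact hlast

lemma mem_PDyckX {i n : ℕ} {Q : Fin (2 * n + 1) → ℤ} :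
    Q ∈ PDyckSet i n ↔ Q ∈ PDyckX i n := by
  constructor
  · rintro ⟨w, z, hlast, hpos⟩
    refine ⟨w, z, ?_, ?_⟩
    · rw [E_eq _ (le_refl (2 * n))]
      exact hlast
    · intro m hm
      rw [E_eq _ (by omega : m ≤ 2 * n)]
      exact hpos ⟨m, by omega⟩ hm
  · rintro ⟨w, z, hlast, hpos⟩
    refine ⟨w, z, ?_, ?_⟩
    · rw [E_eq _ (le_refl (2 * n))] at hlast
      exact hlast
    · intro k hk
      have := hpos k.1 hk
      rwa [E_fin] at this

end Stmt18Aux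

theorem stmt18 (i n : ℕ) (hi : 1 ≤ i) (hn : 1 ≤ n) :
    Nonempty (TSet i n ≃ PDyckSet i n) := by
  refine ⟨{
    toFun := fun P => ⟨Stmt18Aux.fwd n P.1.1 P.1.2,
      Stmt18Aux.mem_PDyckX.mpr (Stmt18Aux.fwd_mem i n hi (Stmt18Aux.mem_TSetX.mp P.2))⟩
    invFun := fun Q => ⟨(Stmt18Aux.bwd1 n Q.1, Stmt18Aux.bwd2 n Q.1),
      Stmt18Aux.mem_TSetX.mpr (Stmt18Aux.bwd_mem i n hi (Stmt18Aux.mem_PDyckX.mp Q.2))⟩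
    left_inv := fun P => ?_
    right_inv := fun Q => ?_ }⟩
  · apply Subtype.ext
    have hz : P.1.1 0 = 0 := (Stmt18Aux.mem_TSetX.mp P.2).2.2.1
    exact Prod.ext (Stmt18Aux.bwd1_fwd n P.1.1 P.1.2 hz) (Stmt18Aux.bwd2_fwd n P.1.1 P.1.2 hz)
  · apply Subtype.ext
    exact Stmt18Aux.fwd_bwd n Q.1
end
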